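/- For any increasing sequence (t_n) of partial evaluation trees of a big-step semantics satisfying the bounded-premises condition, the least upper bound ⊔ t_n is again a partial evaluation tree. -/

import Mathlib

/-- Judgements over configurations `C` and extended results `Option R`
    (`none` stands for the special extra result such as `?`, `wrong`, or `∞`). -/
abbrev Judg (C R : Type) := C × Option R

/-- Lift a complete judgement to an extended judgement. -/
def liftJ {C R : Type} (j : C × R) : Judg C R := (j.1, some j.2)

/-- Bounded-premises condition. -/
def BP {C R : Type} (Rules : Set (List (C × R) × (C × R))) : Prop :=
  ∀ c : C, ∃ b : ℕ, ∀ js res, (js, (c, res)) ∈ Rules → js.length ≤ b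

/-- The extended rule set `Rules_?`: original rules (lifted), start axioms
    `c ⇒ ?`, and partial rules. -/
def RulesQ {C R : Type} (Rules : Set (List (C × R) × (C × R))) :
    Set (List (Judg C R) × Judg C R) :=
  { r | (∃ c : C, r = ([], (c, none)))
      ∨ (∃ (js : List (C × R)) (c : C) (res : R), (js, (c, res)) ∈ Rules ∧ r = (js.map liftJ, (c, some res)))
      ∨ (∃ (js : List (C × R)) (c : C) (res : R) (i : ℕ) (hi : i < js.length) (u : Option R),
          (js, (c, res)) ∈ Rules ∧
          r = ((js.take i).map liftJ ++ [((js[i]'hi).1, u)], (c, none))) }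

/-- Ordered trees labelled in `L`: partial functions from positions (lists of
    child indices) to labels, with nonempty, prefix-closed,
    sibling-downward-closed domain. -/
structure OTree (L : Type) where
  label : List ℕ → Option L
  root_isSome : (label []).isSome
  pref : ∀ α n, (label (α ++ [n])).isSome → (label α).isSome
  sib : ∀ α n k, (label (α ++ [n])).isSome → k ≤ n → (label (α ++ [k])).isSome

/-- A tree is an evaluation tree in a rule set: at every node, the ordered
    children labels together with the node label form a rule. -/
def IsTreeIn {L : Type} (Rules : Set (List L × L)) (t : OTree L) : Prop :=
  ∀ α l, t.label α = some l →
    ∃ ps : List L, (∀ i : ℕ, t.label (α ++ [i]) = ps[i]?) ∧ (ps, l) ∈ Rules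

/-- Partial evaluation trees: evaluation trees in `Rules_?`. -/
def IsPET {C R : Type} (Rules : Set (List (C × R) × (C × R)))
    (t : OTree (Judg C R)) : Prop :=
  IsTreeIn (RulesQ Rules) t

/-- The refinement relation `⊑` on trees labelled by possibly-incomplete
    judgements. -/
def TreeLE {C R : Type} (t t' : OTree (Judg C R)) : Prop :=
  (∀ α, (t.label α).isSome → (t'.label α).isSome) ∧
  ∀ α c u, t.label α = some (c, u) →
    (∃ (u' : Option R), t'.label α = some (c, u')) ∧
    (u.isSome → ∀ β, t.label (α ++ β) = t'.label (α ++ β))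

/-- Strict refinement `⊏`. -/
def TreeLT {C R : Type} (t t' : OTree (Judg C R)) : Prop :=
  TreeLE t t' ∧ t ≠ t'

/-- A tree is finite if its domain is finite. -/
def TreeFinite {L : Type} (t : OTree L) : Prop :=
  Set.Finite {α | (t.label α).isSome}

/-- Well-formedness: every subtree rooted at a complete node is finite. -/
def WellFormed {C R : Type} (t : OTree (Judg C R)) : Prop :=
  ∀ α c r, t.label α = some (c, some r) →
    Set.Finite {β | (t.label (α ++ β)).isSome}

/-- `t` is a least upper bound of the sequence `f` w.r.t. `⊑`. -/
def IsLubSeq {C R : Type} (f : ℕ → OTree (Judg C R)) (t : OTree (Judg C R)) : Prop :=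
  (∀ n, TreeLE (f n) t) ∧ ∀ t', (∀ n, TreeLE (f n) t') → TreeLE t t'

/-- Inductive derivability in a rule set with finite-list premises. -/
inductive IndDerives {J : Type} (Rules : Set (List J × J)) : J → Prop where
  | node (ps : List J) (j : J) : (ps, j) ∈ Rules →
      (∀ p ∈ ps, IndDerives Rules p) → IndDerives Rules j

/-- A set of judgements is consistent w.r.t. a rule set. -/
def ConsistentL {J : Type} (Rules : Set (List J × J)) (X : Set J) : Prop :=
  ∀ j ∈ X, ∃ (ps : List J), (ps, j) ∈ Rules ∧ ∀ p ∈ ps, p ∈ X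

/-- Coinductive derivability: membership in some consistent set. -/
def CoDerives {J : Type} (Rules : Set (List J × J)) (j : J) : Prop :=
  ∃ (X : Set J), ConsistentL Rules X ∧ j ∈ X

/-- Derivability in a generalised inference system (rules + corules):
    membership in a consistent set all of whose elements have a finite
    derivation using both rules and corules. -/
def GenDerives {J : Type} (rules corules : Set (List J × J)) (j : J) : Prop :=
  ∃ (X : Set J), ConsistentL rules X ∧ (∀ x ∈ X, IndDerives (rules ∪ corules) x) ∧ j ∈ X

/-! Along a `⊑`-chain the label at a fixed position changes at most twice (undefined, then
`(c, ?)`, then `(c, r)`), so it is eventually constant, and the tree of eventual labels is the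
least upper bound; hence it is `t`. A node of `t` with configuration `c` is checked at a stage
where its label and the labels of its first `b_c` children have stabilised: the rule used there
is the rule of `t` at that node, and `t` has no further children because each of them would be
a child of that node in some approximant, whose rule has at most `b_c` premises. -/

open Filter

attribute [ext] OTree

def BoundedPremises {L : Type} (Rs : Set (List L × L)) : Prop :=
  ∀ l, ∃ b : ℕ, ∀ ps, (ps, l) ∈ Rs → ps.length ≤ b

theorem BP.boundedPremises_rulesQ {C R : Type} {Rules : Set (List (C × R) × (C × R))}
    (h : BP Rules) : BoundedPremises (RulesQ Rules) := by
  rintro ⟨c, u⟩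
  obtain ⟨b, hb⟩ := h c
  refine ⟨b, ?_⟩
  rintro ps (⟨c', he⟩ | ⟨js, c', res, hmem, he⟩ | ⟨js, c', res, i, hi, u', hmem, he⟩) <;>
    simp only [Prod.mk.injEq] at he
  · simp [he.1]
  · obtain ⟨rfl, rfl, -⟩ := he
    simpa using hb js res hmem
  · obtain ⟨rfl, rfl, -⟩ := he
    have := hb js res hmem
    simp only [List.length_append, List.length_map, List.length_take, List.length_singleton]
    omega

namespace OTree

variable {L : Type}

def ofEventually (g : ℕ → OTree L) (lab : List ℕ → Option L)
    (h : ∀ α, ∀ᶠ m in atTop, (g m).label α = lab α) : OTree L where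
  label := lab
  root_isSome := by
    obtain ⟨m, hm⟩ := (h []).exists
    exact hm ▸ (g m).root_isSome
  pref α n hn := by
    obtain ⟨m, hα, hαn⟩ := ((h α).and (h (α ++ [n]))).exists
    exact hα ▸ (g m).pref α n (hαn ▸ hn)
  sib α n k hn hk := by
    obtain ⟨m, hαn, hαk⟩ := ((h (α ++ [n])).and (h (α ++ [k]))).exists
    exact hαk ▸ (g m).sib α n k (hαn ▸ hn) hk

end OTree

theorem IsTreeIn.of_eventually {L : Type} {Rs : Set (List L × L)} (hRs : BoundedPremises Rs)
    {g : ℕ → OTree L} {T : OTree L} (hg : ∀ m, IsTreeIn Rs (g m))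
    (hT : ∀ α, ∀ᶠ m in atTop, (g m).label α = T.label α) : IsTreeIn Rs T := by
  intro α l hl
  obtain ⟨b, hb⟩ := hRs l
  have hwidth : ∀ i, (T.label (α ++ [i])).isSome → i < b := by
    intro i hi
    obtain ⟨m, hα, hαi⟩ := ((hT α).and (hT (α ++ [i]))).exists
    obtain ⟨ps, hps, hmem⟩ := hg m α l (hα.trans hl)
    have hi' : i < ps.length := by simpa [← hαi, hps] using hi
    exact hi'.trans_le (hb ps hmem)
  obtain ⟨m, hα, hchildren⟩ :=
    ((hT α).and ((eventually_all_finset (Finset.range b)).2 fun i _ => hT (α ++ [i]))).exists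
  obtain ⟨ps, hps, hmem⟩ := hg m α l (hα.trans hl)
  refine ⟨ps, fun i => ?_, hmem⟩
  by_cases hi : i < b
  · rw [← hchildren i (Finset.mem_range.2 hi), hps]
  · rw [List.getElem?_eq_none ((hb ps hmem).trans (not_lt.1 hi))]
    exact Option.not_isSome_iff_eq_none.1 fun h => hi (hwidth i h)

section TreeLE

variable {C R : Type}

theorem TreeLE.refl (t : OTree (Judg C R)) : TreeLE t t :=
  ⟨fun _ h => h, fun _ _ u h => ⟨⟨u, h⟩, fun _ _ => rfl⟩⟩

theorem TreeLE.exists_label_eq {t t' : OTree (Judg C R)} (h : TreeLE t t') {α : List ℕ} {c : C}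
    {u : Option R} (hα : t.label α = some (c, u)) : ∃ u', t'.label α = some (c, u') :=
  (h.2 α c u hα).1

theorem TreeLE.label_eq_of_complete {t t' : OTree (Judg C R)} (h : TreeLE t t') {α : List ℕ}
    {c : C} {r : R} (hα : t.label α = some (c, some r)) : t'.label α = some (c, some r) := by
  simpa [hα] using ((h.2 α c _ hα).2 rfl []).symm

theorem TreeLE.trans {t₁ t₂ t₃ : OTree (Judg C R)} (h₁₂ : TreeLE t₁ t₂) (h₂₃ : TreeLE t₂ t₃) :
    TreeLE t₁ t₃ := by
  refine ⟨fun α h => h₂₃.1 α (h₁₂.1 α h), fun α c u hα => ?_⟩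
  obtain ⟨u', hu'⟩ := h₁₂.exists_label_eq hα
  refine ⟨h₂₃.exists_label_eq hu', fun hu β => ?_⟩
  obtain ⟨r, rfl⟩ := Option.isSome_iff_exists.1 hu
  have hα₂ := h₁₂.label_eq_of_complete hα
  exact ((h₁₂.2 α c _ hα).2 hu β).trans ((h₂₃.2 α c _ hα₂).2 rfl β)

theorem TreeLE.antisymm {t t' : OTree (Judg C R)} (h : TreeLE t t') (h' : TreeLE t' t) :
    t = t' := by
  ext1
  funext α
  rcases hα : t.label α with _ | ⟨c, _ | r⟩
  · exact (Option.not_isSome_iff_eq_none.1 fun hs => by simpa [hα] using h'.1 α hs).symm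
  · obtain ⟨u', hu'⟩ := h.exists_label_eq hα
    cases u' with
    | none => exact hu'.symm
    | some r => simpa [hα] using h'.label_eq_of_complete hu'
  · exact (h.label_eq_of_complete hα).symm

theorem treeLE_of_le {f : ℕ → OTree (Judg C R)} (hf : ∀ n, TreeLE (f n) (f (n + 1))) {m n : ℕ}
    (hmn : m ≤ n) : TreeLE (f m) (f n) := by
  induction n, hmn using Nat.le_induction with
  | base => exact TreeLE.refl _
  | succ n _ ih => exact ih.trans (hf n)

theorem TreeLE.of_eventually_right {t T : OTree (Judg C R)} {g : ℕ → OTree (Judg C R)}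
    (hle : ∀ᶠ m in atTop, TreeLE t (g m))
    (hT : ∀ α, ∀ᶠ m in atTop, (g m).label α = T.label α) : TreeLE t T := by
  refine ⟨fun α h => ?_, fun α c u h => ⟨?_, fun hu β => ?_⟩⟩
  · obtain ⟨m, hm, hα⟩ := (hle.and (hT α)).exists
    exact hα ▸ hm.1 α h
  · obtain ⟨m, hm, hα⟩ := (hle.and (hT α)).exists
    exact hα ▸ hm.exists_label_eq h
  · obtain ⟨m, hm, hαβ⟩ := (hle.and (hT (α ++ β))).exists
    exact ((hm.2 α c u h).2 hu β).trans hαβ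

theorem TreeLE.of_eventually_left {T t : OTree (Judg C R)} {g : ℕ → OTree (Judg C R)}
    (hle : ∀ m, TreeLE (g m) t)
    (hT : ∀ α, ∀ᶠ m in atTop, (g m).label α = T.label α) : TreeLE T t := by
  refine ⟨fun α h => ?_, fun α c u h => ⟨?_, fun hu β => ?_⟩⟩
  · obtain ⟨m, hα⟩ := (hT α).exists
    exact (hle m).1 α (hα ▸ h)
  · obtain ⟨m, hα⟩ := (hT α).exists
    exact (hle m).exists_label_eq (hα.trans h)
  · obtain ⟨m, hα, hαβ⟩ := ((hT α).and (hT (α ++ β))).exists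
    exact hαβ.symm.trans (((hle m).2 α c u (hα.trans h)).2 hu β)

end TreeLE

section Chain

variable {C R : Type} {f : ℕ → OTree (Judg C R)}

theorem exists_eventually_label_eq (hf : ∀ ⦃m n⦄, m ≤ n → TreeLE (f m) (f n)) (α : List ℕ) :
    ∃ l, ∀ᶠ m in atTop, (f m).label α = l := by
  by_cases hcomplete : ∃ n c r, (f n).label α = some (c, some r)
  · obtain ⟨n, c, r, hn⟩ := hcomplete
    exact ⟨_, eventually_atTop.2 ⟨n, fun m hm => (hf hm).label_eq_of_complete hn⟩⟩
  by_cases hpartial : ∃ n c, (f n).label α = some (c, none)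
  · obtain ⟨n, c, hn⟩ := hpartial
    refine ⟨some (c, none), eventually_atTop.2 ⟨n, fun m hm => ?_⟩⟩
    obtain ⟨_ | r, hm⟩ := (hf hm).exists_label_eq hn
    · exact hm
    · exact absurd ⟨m, c, r, hm⟩ hcomplete
  push Not at hcomplete hpartial
  refine ⟨none, Eventually.of_forall fun m => ?_⟩
  rcases hm : (f m).label α with _ | ⟨c, _ | r⟩
  · rfl
  · exact absurd hm (hpartial m c)
  · exact absurd hm (hcomplete m c r)

theorem isLubSeq_of_eventually (hf : ∀ ⦃m n⦄, m ≤ n → TreeLE (f m) (f n)) {T : OTree (Judg C R)}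
    (hT : ∀ α, ∀ᶠ m in atTop, (f m).label α = T.label α) : IsLubSeq f T :=
  ⟨fun n => TreeLE.of_eventually_right (eventually_atTop.2 ⟨n, fun _ hm => hf hm⟩) hT,
    fun _ ht => TreeLE.of_eventually_left ht hT⟩

theorem IsLubSeq.unique {t t' : OTree (Judg C R)} (h : IsLubSeq f t) (h' : IsLubSeq f t') :
    t = t' :=
  (h.2 t' h'.1).antisymm (h'.2 t h.1)

end Chain

/-- the least upper bound of an increasing sequence of partial
    evaluation trees of a big-step semantics with bounded premises is a
    partial evaluation tree. -/
theorem lub_isPET {C R : Type} (Rules : Set (List (C × R) × (C × R)))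
    (hbp : BP Rules) (f : ℕ → OTree (Judg C R))
    (hpet : ∀ n, IsPET Rules (f n)) (hmono : ∀ n, TreeLE (f n) (f (n + 1)))
    (t : OTree (Judg C R)) (hlub : IsLubSeq f t) :
    IsPET Rules t := by
  have hchain : ∀ ⦃m n⦄, m ≤ n → TreeLE (f m) (f n) := fun _ _ => treeLE_of_le hmono
  choose lab hlab using exists_eventually_label_eq hchain
  obtain rfl : t = OTree.ofEventually f lab hlab := hlub.unique (isLubSeq_of_eventually hchain hlab)
  exact IsTreeIn.of_eventually hbp.boundedPremises_rulesQ hpet hlab
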